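/- Let X be a real random variable with mean 0 and variance 1 admitting a moment generating function on an open interval around 0, and let Y = μ + σX with (μ, σ) ≠ (0, 1), σ ≥ 0. Then there exists t_0 ≠ 0 such that E[exp(t_0 Y)] ≠ E[exp(t_0 X)]. -/

import Mathlib

/-!
If the two mgfs agreed at every `t ≠ 0` they would agree everywhere, hence so would their
derivatives at `0`, which are the moments (the mgf of `X` is analytic near `0`). The first
moments give `μ' = 𝔼[X] = 0`, and then the second ones give `σ'² 𝔼[X²] = 𝔼[X²] = 1`, so
`σ' = 1`.
-/

open MeasureTheory ProbabilityTheory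

namespace ProbabilityTheory

variable {Ω Ω' : Type*} {mΩ : MeasurableSpace Ω} {mΩ' : MeasurableSpace Ω'}
  {μ : Measure Ω} {ν : Measure Ω'} {X : Ω → ℝ} {Y : Ω' → ℝ}

lemma zero_mem_interior_integrableExpSet {ε : ℝ} (hε : 0 < ε)
    (h : ∀ t : ℝ, |t| < ε → Integrable (fun ω => Real.exp (t * X ω)) μ) :
    0 ∈ interior (integrableExpSet X μ) :=
  mem_interior_iff_mem_nhds.2 <| Filter.mem_of_superset (Ioo_mem_nhds (neg_neg_iff_pos.2 hε) hε)
    fun t ht => h t (abs_lt.2 ht)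

/-- The mgf vanishes exactly where `exp (t * X)` fails to be integrable, so it determines
`integrableExpSet`. -/
lemma integrableExpSet_eq_of_mgf_eq [NeZero μ] [NeZero ν] (h : mgf X μ = mgf Y ν) :
    integrableExpSet X μ = integrableExpSet Y ν := by
  ext t
  simp only [integrableExpSet, Set.mem_ofPred_eq, ← mgf_pos_iff, h]

lemma moment_eq_of_mgf_eq [NeZero μ] [NeZero ν] (h : mgf X μ = mgf Y ν)
    (h0 : 0 ∈ interior (integrableExpSet X μ)) (n : ℕ) : μ[X ^ n] = ν[Y ^ n] := by
  rw [← iteratedDeriv_mgf_zero h0, h,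
    iteratedDeriv_mgf_zero (integrableExpSet_eq_of_mgf_eq h ▸ h0)]

lemma mgf_eq_of_forall_ne_zero [IsProbabilityMeasure μ] {X' : Ω → ℝ}
    (h : ∀ t ≠ 0, mgf X μ t = mgf X' μ t) : mgf X μ = mgf X' μ := by
  funext t
  rcases eq_or_ne t 0 with rfl | ht
  · simp only [mgf_zero]
  · exact h t ht

end ProbabilityTheory

theorem stmt_14_general {Ω : Type*} [MeasureSpace Ω] [IsProbabilityMeasure (ℙ : Measure Ω)]
    (X : Ω → ℝ) (hXmem : MemLp X 2 ℙ)
    (hmean : ∫ ω, X ω ∂ℙ = 0) (hvar : variance X ℙ = 1)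
    (ε : ℝ) (hε : 0 < ε)
    (hmgf : ∀ t : ℝ, |t| < ε → Integrable (fun ω => Real.exp (t * X ω)) ℙ)
    (μ' σ' : ℝ) (hσ' : 0 ≤ σ') (hne : (μ', σ') ≠ ((0 : ℝ), (1 : ℝ))) :
    ∃ t₀ : ℝ, t₀ ≠ 0 ∧
      mgf (fun ω => μ' + σ' * X ω) ℙ t₀ ≠ mgf X ℙ t₀ := by
  by_contra! hcon
  have hM := (mgf_eq_of_forall_ne_zero hcon).symm
  have h0 := zero_mem_interior_integrableExpSet hε hmgf
  have hX2 : ∫ ω, X ω ^ 2 ∂ℙ = 1 := by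
    simpa [hmean, hvar] using (variance_eq_sub hXmem).symm
  have hμ' : μ' = 0 := by
    have h1 := moment_eq_of_mgf_eq hM h0 1
    simp only [pow_one] at h1
    rw [integral_add (integrable_const _) ((hXmem.integrable one_le_two).const_mul σ'),
      integral_const_mul, hmean] at h1
    simpa using h1.symm
  subst hμ'
  have hσ1 : σ' = 1 := by
    have h2 := moment_eq_of_mgf_eq hM h0 2
    simp only [Pi.pow_apply, zero_add, mul_pow, integral_const_mul, hX2] at h2
    nlinarith
  exact hne (by rw [hσ1])

/-- If `X` has mean `0` and variance `1` and admits a moment generating function on an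
open interval around `0`, and `Y = μ' + σ'·X` with `(μ', σ') ≠ (0, 1)`, `σ' ≥ 0`, then
there is `t₀ ≠ 0` with `E[exp(t₀ Y)] ≠ E[exp(t₀ X)]`. -/
theorem stmt_14 {Ω : Type*} [MeasureSpace Ω] [IsProbabilityMeasure (ℙ : Measure Ω)]
    (X : Ω → ℝ) (hXmeas : Measurable X) (hXmem : MemLp X 2 ℙ)
    (hmean : ∫ ω, X ω ∂ℙ = 0) (hvar : variance X ℙ = 1)
    (ε : ℝ) (hε : 0 < ε)
    (hmgf : ∀ t : ℝ, |t| < ε → Integrable (fun ω => Real.exp (t * X ω)) ℙ)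
    (μ' σ' : ℝ) (hσ' : 0 ≤ σ') (hne : (μ', σ') ≠ ((0 : ℝ), (1 : ℝ))) :
    ∃ t₀ : ℝ, t₀ ≠ 0 ∧
      mgf (fun ω => μ' + σ' * X ω) ℙ t₀ ≠ mgf X ℙ t₀ :=
  stmt_14_general X hXmem hmean hvar ε hε hmgf μ' σ' hσ' hne
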